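/- arXiv:1410.2266 — 2 statements merged into one kernel-verified Lean document; each statement's English description precedes it below -/
import Mathlib

section
/- Let q be a probability distribution on [n], let m > 0 be a real number, and let X_i be a random variable distributed as Poi(m·q_i). Set Z_i = (X_i − m/n)² − X_i and Δ_i = 1/n − q_i. Then E[Z_i] = m²·Δ_i². Consequently, if X_1,…,X_n are independent with X_i ~ Poi(m·q_i) and Z = Σ_{i=1}^n Z_i, then E[Z] = m²·‖q − U_n‖₂². -/
open Finset ProbabilityTheory MeasureTheory

/-- The probability mass that a function on `Fin n` assigns to the (0-indexed)
interval `[a, b)`. -/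
noncomputable def intervalMass {n : ℕ} (q : Fin n → ℝ) (a b : ℕ) : ℝ :=
  ∑ j ∈ Finset.univ.filter (fun j : Fin n => a ≤ (j : ℕ) ∧ (j : ℕ) < b), q j

/-- `q` is a probability distribution on `[n]` (identified with `Fin n`). -/
noncomputable def IsDist {n : ℕ} (q : Fin n → ℝ) : Prop := (∀ i, 0 ≤ q i) ∧ ∑ i, q i = 1

/-- The `A_k` distance between `p` and `q` on `Fin n`: the supremum, over all partitions of
`Fin n` into `k` consecutive intervals (described by their monotone sequence of boundary
points), of the sum of the discrepancies `|p(I) - q(I)|` over the intervals. -/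
noncomputable def AkDist (n k : ℕ) (p q : Fin n → ℝ) : ℝ :=
  sSup { x : ℝ | ∃ b : Fin (k + 1) → ℕ, Monotone b ∧ b 0 = 0 ∧ b (Fin.last k) = n ∧
    x = ∑ i : Fin k,
      |intervalMass p (b i.castSucc) (b i.succ) - intervalMass q (b i.castSucc) (b i.succ)| }

/-- The `L1` distance between two functions on `Fin n`. -/
noncomputable def L1Dist {n : ℕ} (p q : Fin n → ℝ) : ℝ := ∑ i, |p i - q i|

/-- The `L2` distance between two functions on `Fin n`. -/
noncomputable def L2Dist {n : ℕ} (p q : Fin n → ℝ) : ℝ := Real.sqrt (∑ i, (p i - q i) ^ 2)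

/-- The uniform distribution on `Fin n`. -/
noncomputable def unif (n : ℕ) : Fin n → ℝ := fun _ => 1 / n

/-- The probability that the `m`-fold product measure `q^{⊗m}` assigns to a set
`A ⊆ [n]^m` of sample sequences. -/
noncomputable def prodProb {n m : ℕ} (q : Fin n → ℝ) (A : Finset (Fin m → Fin n)) : ℝ :=
  ∑ x ∈ A, ∏ j, q (x j)

/-- The reduced distribution of `q` w.r.t. the partition of `Fin n` into `ℓ` consecutive
intervals of equal length `n / ℓ` (assuming `ℓ ∣ n`). -/
noncomputable def reducedDist {n : ℕ} (q : Fin n → ℝ) (ℓ : ℕ) : Fin ℓ → ℝ :=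
  fun i => intervalMass q ((i : ℕ) * (n / ℓ)) (((i : ℕ) + 1) * (n / ℓ))

/-- `p` is a `t`-piecewise degree-`d` function on `Fin n`: there is a partition of `Fin n`
into `t` consecutive intervals on each of which `p` agrees with a real polynomial of degree
at most `d`. -/
noncomputable def IsPiecewisePoly {n : ℕ} (t d : ℕ) (p : Fin n → ℝ) : Prop :=
  ∃ b : Fin (t + 1) → ℕ, Monotone b ∧ b 0 = 0 ∧ b (Fin.last t) = n ∧
    ∀ i : Fin t, ∃ P : Polynomial ℝ, P.degree ≤ (d : ℕ) ∧
      ∀ x : Fin n, b i.castSucc ≤ (x : ℕ) → (x : ℕ) < b i.succ → p x = P.eval ((x : ℕ) : ℝ)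

/-- `q` is `k`-flat: there is a partition of `Fin n` into `k` consecutive intervals
on each of which `q` is constant. -/
noncomputable def IsKFlat {n : ℕ} (k : ℕ) (q : Fin n → ℝ) : Prop :=
  ∃ b : Fin (k + 1) → ℕ, Monotone b ∧ b 0 = 0 ∧ b (Fin.last k) = n ∧
    ∀ i : Fin k, ∃ c : ℝ, ∀ x : Fin n, b i.castSucc ≤ (x : ℕ) → (x : ℕ) < b i.succ → q x = c

/-- The term `Discr(I)² / width(I)^{1/8}` for the interval `I = [a, b)` in `Fin n`, where
the discrepancy is `Discr(I) = |q(I) - U_n(I)|` and the width is `|I|/n` (relative to the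
uniform distribution `U_n`). -/
noncomputable def ssTerm {n : ℕ} (q : Fin n → ℝ) (a b : ℕ) : ℝ :=
  |intervalMass q a b - ((b - a : ℕ) : ℝ) / n| ^ 2 / (((b - a : ℕ) : ℝ) / n) ^ ((1 : ℝ) / 8)

/-- The squared scale-sensitive-`L2` distance between `q` and the uniform distribution
on `Fin n`, at scale `1/k`: the supremum, over all partitions of `Fin n` into consecutive
nonempty intervals each of width at most `1/k`, of `∑ Discr(I)² / width(I)^{1/8}`. -/
noncomputable def ssDistSq (n k : ℕ) (q : Fin n → ℝ) : ℝ :=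
  sSup { x : ℝ | ∃ r : ℕ, ∃ b : Fin (r + 1) → ℕ, StrictMono b ∧ b 0 = 0 ∧ b (Fin.last r) = n ∧
    (∀ i : Fin r, ((b i.succ - b i.castSucc : ℕ) : ℝ) / n ≤ 1 / k) ∧
    x = ∑ i : Fin r, ssTerm q (b i.castSucc) (b i.succ) }

/-! The factorial moments of `X ~ Poi(r)` are `E[X (X-1) ⋯ (X-k+1)] = r ^ k`: shifting the
summation index by `k` turns the weighted series back into the Poisson mass series.
Since `(X - c)² - X = X (X-1) - 2cX + c²`, this gives `E[(X - c)² - X] = (r - c)²`; with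
`r = m qᵢ` and `c = m / n` that is `m² Δᵢ²`, and linearity of expectation sums these to
`m² ‖q - Uₙ‖₂²`. -/

open Real NNReal Nat

namespace ProbabilityTheory

lemma poisson_weight_add_mul_descFactorial (r : ℝ≥0) (n k : ℕ) :
    exp (-r) * r ^ (n + k) / (n + k)! * ((n + k).descFactorial k : ℝ) =
      r ^ k * (exp (-r) * r ^ n / n !) := by
  have hfact : ((n + k)! : ℝ) = n ! * (n + k).descFactorial k := by
    rw [← Nat.cast_mul, ← Nat.factorial_mul_descFactorial (Nat.le_add_left k n),
      Nat.add_sub_cancel]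
  have hdesc : ((n + k).descFactorial k : ℝ) ≠ 0 := by
    rw [Nat.cast_ne_zero, Ne, Nat.descFactorial_eq_zero_iff_lt]; omega
  rw [hfact, pow_add]
  field_simp

lemma hasSum_poisson_weight_mul_descFactorial (r : ℝ≥0) (k : ℕ) :
    HasSum (fun n ↦ exp (-r) * r ^ n / n ! * (n.descFactorial k : ℝ)) (r ^ k) := by
  rw [← hasSum_nat_add_iff' k]
  have hlow : ∑ n ∈ Finset.range k, exp (-r) * r ^ n / n ! * (n.descFactorial k : ℝ) = 0 :=
    Finset.sum_eq_zero fun n hn ↦ by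
      rw [Nat.descFactorial_eq_zero_iff_lt.mpr (Finset.mem_range.mp hn), Nat.cast_zero, mul_zero]
  simp only [hlow, sub_zero, poisson_weight_add_mul_descFactorial]
  simpa using (hasSum_one_poissonMeasure r).mul_left ((r : ℝ) ^ k)

lemma integrable_descFactorial_poissonMeasure (r : ℝ≥0) (k : ℕ) :
    Integrable (fun n : ℕ ↦ (n.descFactorial k : ℝ)) (poissonMeasure r) := by
  rw [integrable_poissonMeasure_iff]
  simpa only [Real.norm_natCast] using (hasSum_poisson_weight_mul_descFactorial r k).summable

lemma integral_descFactorial_poissonMeasure (r : ℝ≥0) (k : ℕ) :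
    ∫ n, (n.descFactorial k : ℝ) ∂poissonMeasure r = r ^ k := by
  rw [integral_poissonMeasure]
  exact (hasSum_poisson_weight_mul_descFactorial r k).tsum_eq

lemma sub_sq_sub_self_eq_descFactorial (n : ℕ) (c : ℝ) :
    ((n : ℝ) - c) ^ 2 - n = n.descFactorial 2 - 2 * c * n.descFactorial 1 + c ^ 2 := by
  rw [Nat.cast_descFactorial_two, Nat.descFactorial_one]
  ring

lemma integrable_sub_sq_sub_self_poissonMeasure (r : ℝ≥0) (c : ℝ) :
    Integrable (fun n : ℕ ↦ ((n : ℝ) - c) ^ 2 - n) (poissonMeasure r) := by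
  simp only [sub_sq_sub_self_eq_descFactorial]
  exact ((integrable_descFactorial_poissonMeasure r 2).sub
    ((integrable_descFactorial_poissonMeasure r 1).const_mul (2 * c))).add (integrable_const _)

lemma integral_sub_sq_sub_self_poissonMeasure (r : ℝ≥0) (c : ℝ) :
    ∫ n, (((n : ℝ) - c) ^ 2 - n) ∂poissonMeasure r = ((r : ℝ) - c) ^ 2 := by
  have h₂ := integrable_descFactorial_poissonMeasure r 2
  have h₁ := (integrable_descFactorial_poissonMeasure r 1).const_mul (2 * c)
  simp only [sub_sq_sub_self_eq_descFactorial]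
  rw [integral_add (h₂.sub h₁ : Integrable (fun n ↦ _ - _) _) (integrable_const _),
    integral_sub h₂ h₁, integral_const_mul,
    integral_descFactorial_poissonMeasure, integral_descFactorial_poissonMeasure, integral_const]
  simp only [pow_one, probReal_univ, smul_eq_mul, one_mul]
  ring

section HasLaw

variable {Ω : Type*} [MeasurableSpace Ω] {μ : Measure Ω} {X : Ω → ℕ} {r : ℝ≥0}

lemma HasLaw.integral_sub_sq_sub_self_poisson (hX : HasLaw X (poissonMeasure r) μ) (c : ℝ) :
    ∫ ω, (((X ω : ℝ) - c) ^ 2 - X ω) ∂μ = ((r : ℝ) - c) ^ 2 :=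
  (hX.integral_comp .of_discrete).trans (integral_sub_sq_sub_self_poissonMeasure r c)

lemma HasLaw.integrable_sub_sq_sub_self_poisson (hX : HasLaw X (poissonMeasure r) μ) (c : ℝ) :
    Integrable (fun ω ↦ ((X ω : ℝ) - c) ^ 2 - X ω) μ := by
  have := integrable_sub_sq_sub_self_poissonMeasure r c
  rw [← hX.map_eq] at this
  exact this.comp_aemeasurable hX.aemeasurable

end HasLaw

end ProbabilityTheory

lemma L2Dist_sq {n : ℕ} (p q : Fin n → ℝ) : L2Dist p q ^ 2 = ∑ i, (p i - q i) ^ 2 :=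
  Real.sq_sqrt (Finset.sum_nonneg fun _ _ ↦ sq_nonneg _)

theorem poisson_chi_squared_expectation_general (n : ℕ) (q : Fin n → ℝ) (hq : IsDist q)
    (m : ℝ) (hm : 0 < m)
    (Ω : Type) [MeasurableSpace Ω] (μ : Measure Ω)
    (X : Fin n → Ω → ℕ) (hX : ∀ i, Measurable (X i))
    (hdist : ∀ i, μ.map (X i) = poissonMeasure (m * q i).toNNReal) :
    (∀ i, ∫ ω, (((X i ω : ℝ) - m / n) ^ 2 - (X i ω : ℝ)) ∂μ = m ^ 2 * (1 / n - q i) ^ 2) ∧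
    (iIndepFun X μ →
      ∫ ω, ∑ i, (((X i ω : ℝ) - m / n) ^ 2 - (X i ω : ℝ)) ∂μ =
        m ^ 2 * L2Dist q (unif n) ^ 2) := by
  have hlaw (i : Fin n) : HasLaw (X i) (poissonMeasure (m * q i).toNNReal) μ :=
    ⟨(hX i).aemeasurable, hdist i⟩
  have hmean (i : Fin n) :
      ∫ ω, (((X i ω : ℝ) - m / n) ^ 2 - (X i ω : ℝ)) ∂μ = m ^ 2 * (1 / n - q i) ^ 2 := by
    rw [(hlaw i).integral_sub_sq_sub_self_poisson,
      Real.coe_toNNReal _ (mul_nonneg hm.le (hq.1 i))]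
    ring
  refine ⟨hmean, fun _ ↦ ?_⟩
  rw [integral_finsetSum _ fun i _ ↦ (hlaw i).integrable_sub_sq_sub_self_poisson _, L2Dist_sq,
    Finset.mul_sum]
  refine Finset.sum_congr rfl fun i _ ↦ ?_
  rw [hmean, unif]
  ring

/-- **Expectation of the chi-squared statistic.**
If `X i ~ Poi(m qᵢ)` then `E[Zᵢ] = m² Δᵢ²` where `Zᵢ = (Xᵢ - m/n)² - Xᵢ` and `Δᵢ = 1/n - qᵢ`;
consequently, if the `X i` are independent and `Z = ∑ i Zᵢ`, then
`E[Z] = m² ‖q - U_n‖₂²`. -/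
theorem poisson_chi_squared_expectation (n : ℕ) (hn : 1 ≤ n) (q : Fin n → ℝ) (hq : IsDist q)
    (m : ℝ) (hm : 0 < m)
    (Ω : Type) [MeasurableSpace Ω] (μ : Measure Ω) [IsProbabilityMeasure μ]
    (X : Fin n → Ω → ℕ) (hX : ∀ i, Measurable (X i))
    (hdist : ∀ i, μ.map (X i) = poissonMeasure (m * q i).toNNReal) :
    (∀ i, ∫ ω, (((X i ω : ℝ) - m / n) ^ 2 - (X i ω : ℝ)) ∂μ = m ^ 2 * (1 / n - q i) ^ 2) ∧
    (iIndepFun X μ →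
      ∫ ω, ∑ i, (((X i ω : ℝ) - m / n) ^ 2 - (X i ω : ℝ)) ∂μ =
        m ^ 2 * L2Dist q (unif n) ^ 2) :=
  poisson_chi_squared_expectation_general n q hq m hm Ω μ X hX hdist
end

section
/- Let k ≥ 2 and j₀ ≥ 1 be integers, let n = k·2^{j₀−1}, let q be a probability distribution on [n], and let ε ∈ (0,1). If ‖q − U_n‖_{A_k} ≥ ε, then there exists an integer j with 0 ≤ j ≤ j₀−1 such that ‖q_r^{I^{(j)}} − U_{ℓ_j}‖₂² ≥ 10^{−10}·2^{−j/4}·ε²/k, where ℓ_j = k·2^j. -/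
open Finset ProbabilityTheory MeasureTheory

/-! Put `φ x = q([0, x)) - x / n`, so that the discrepancy of `[a, b)` is `φ b - φ a`, and
telescope `φ x` through the roundings of `x` down to the cell grids of the levels
`0, …, J = j₀ - 1`. Along the `k + 1` boundary points of a partition, the level-`0` parts sum to
at most the total `|discrepancy|` of the `k` level-`0` cells. Refining from level `j` to `j + 1`
changes the rounding of a point by the discrepancy of at most one level-`(j + 1)` cell, and
boundary points that move between cells give distinct cells. Cauchy–Schwarz then bounds the
`A_k` distance by `2 √k ∑ⱼ ‖q_r^{I^{(j)}} - U_{ℓ_j}‖₂`, which is below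
`2 · 10⁻⁵ ε ∑ⱼ 2^{-j/8} < ε` if every level violates the claimed bound. -/

theorem sum_abs_le_sqrt_card_mul_sqrt_sum_sq {ι : Type*} (s : Finset ι) (u : ι → ℝ) :
    ∑ i ∈ s, |u i| ≤ √(#s) * √(∑ i ∈ s, u i ^ 2) := by
  rw [← Real.sqrt_mul (Nat.cast_nonneg _), Real.le_sqrt (by positivity) (by positivity)]
  simpa only [sq_abs] using sq_sum_le_card_mul_sum_sq (s := s) (f := fun i => |u i|)

theorem sum_abs_comp_le_sqrt_card_mul_sqrt {ι : Type*} (s : Finset ι) {f : ι → ℕ}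
    (hf : Set.InjOn f s) {N : ℕ} (hN : ∀ i ∈ s, f i < N) (h : ℕ → ℝ) :
    ∑ i ∈ s, |h (f i)| ≤ √(#s) * √(∑ m ∈ range N, h m ^ 2) := by
  calc ∑ i ∈ s, |h (f i)| ≤ √(#s) * √(∑ i ∈ s, h (f i) ^ 2) :=
        sum_abs_le_sqrt_card_mul_sqrt_sum_sq s _
    _ = √(#s) * √(∑ m ∈ s.image f, h m ^ 2) := by rw [sum_image hf]
    _ ≤ √(#s) * √(∑ m ∈ range N, h m ^ 2) := by
        gcongr
        simpa [image_subset_iff] using hN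

section MonotoneSequence

variable {k : ℕ} {c : Fin (k + 1) → ℕ}

theorem Monotone.sum_abs_sub_le_sum_Ico (hc : Monotone c) (ψ : ℕ → ℝ) :
    ∑ i : Fin k, |ψ (c i.succ) - ψ (c i.castSucc)| ≤
      ∑ m ∈ Ico (c 0) (c (Fin.last k)), |ψ (m + 1) - ψ m| := by
  induction k with
  | zero => exact sum_nonneg fun _ _ => abs_nonneg _
  | succ k ih =>
    have hlast : c (Fin.last k).castSucc ≤ c (Fin.last (k + 1)) := hc (Fin.le_last _)
    rw [Fin.sum_univ_castSucc, ← sum_Ico_consecutive _ (hc (Fin.zero_le _)) hlast]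
    gcongr
    · exact ih (hc.comp Fin.strictMono_castSucc.monotone)
    · rw [Fin.succ_last, ← sum_Ico_sub _ hlast]
      exact abs_sum_le_sum_abs _ _

theorem Monotone.sum_abs_sub_le_two_mul_sqrt (hc : Monotone c) (h : ℕ → ℝ) :
    ∑ i : Fin k, |h (c i.succ) - h (c i.castSucc)| ≤
      2 * √k * √(∑ m ∈ range (c (Fin.last k) + 1), h m ^ 2) := by
  set E := ∑ m ∈ range (c (Fin.last k) + 1), h m ^ 2
  -- Only the steps where `c` moves contribute, and along them both endpoints are injective.
  set S := univ.filter fun i : Fin k => c i.castSucc < c i.succ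
  have hstep : ∀ i j : Fin k, i < j → c i.succ ≤ c j.castSucc :=
    fun i j hij => hc (Fin.succ_le_castSucc_iff.mpr hij)
  have hsucc : Set.InjOn (fun i : Fin k => c i.succ) S :=
    StrictMonoOn.injOn fun i _ j hj hij => (hstep i j hij).trans_lt (mem_filter.mp hj).2
  have hcastSucc : Set.InjOn (fun i : Fin k => c i.castSucc) S :=
    StrictMonoOn.injOn fun i hi j _ hij => (mem_filter.mp hi).2.trans_le (hstep i j hij)
  have hlt : ∀ i, c i < c (Fin.last k) + 1 := fun i => Nat.lt_succ_of_le (hc i.le_last)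
  have hS : √(#S) ≤ √k :=
    Real.sqrt_le_sqrt (by exact_mod_cast (card_filter_le _ _).trans (card_fin k).le)
  calc ∑ i : Fin k, |h (c i.succ) - h (c i.castSucc)|
      = ∑ i ∈ S, |h (c i.succ) - h (c i.castSucc)| := by
        refine (sum_filter_of_ne fun i _ hi => ?_).symm
        refine (hc (Fin.castSucc_le_succ i)).lt_of_ne fun heq => hi ?_
        simp [heq]
    _ ≤ ∑ i ∈ S, (|h (c i.succ)| + |h (c i.castSucc)|) := sum_le_sum fun _ _ => abs_sub _ _
    _ ≤ √(#S) * √E + √(#S) * √E := by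
        rw [sum_add_distrib]
        exact add_le_add (sum_abs_comp_le_sqrt_card_mul_sqrt S hsucc (fun i _ => hlt _) h)
          (sum_abs_comp_le_sqrt_card_mul_sqrt S hcastSucc (fun i _ => hlt _) h)
    _ ≤ 2 * √k * √E := by nlinarith [Real.sqrt_nonneg E]

end MonotoneSequence

-- Level `j` consists of the `k * 2 ^ j` cells `[m * 2 ^ (J - j), (m + 1) * 2 ^ (J - j))`.
noncomputable def levelEnergy (φ : ℕ → ℝ) (k J j : ℕ) : ℝ :=
  ∑ m ∈ range (k * 2 ^ j), (φ ((m + 1) * 2 ^ (J - j)) - φ (m * 2 ^ (J - j))) ^ 2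

def levelFloor (J j x : ℕ) : ℕ := x / 2 ^ (J - j) * 2 ^ (J - j)

theorem sum_sq_sub_half_mul_two_le (f : ℕ → ℝ) (N : ℕ) :
    ∑ c ∈ range (N + 1), (f c - f (c / 2 * 2)) ^ 2 ≤
      ∑ m ∈ range N, (f (m + 1) - f m) ^ 2 := by
  rw [sum_range_succ', Nat.zero_div, zero_mul, sub_self, sq, mul_zero, add_zero]
  refine sum_le_sum fun m _ => ?_
  rcases (by omega : (m + 1) / 2 * 2 = m ∨ (m + 1) / 2 * 2 = m + 1) with h | h <;>
    simp [h, sq_nonneg]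

section Multiscale

variable (φ : ℕ → ℝ) {k J : ℕ} {b : Fin (k + 1) → ℕ}

theorem Monotone.sum_abs_sub_levelFloor_zero_le (hb : Monotone b)
    (hn : b (Fin.last k) ≤ k * 2 ^ J) :
    ∑ i : Fin k, |φ (levelFloor J 0 (b i.succ)) - φ (levelFloor J 0 (b i.castSucc))| ≤
      √k * √(levelEnergy φ k J 0) := by
  simp only [levelFloor, Nat.sub_zero]
  have hc : Monotone fun i => b i / 2 ^ J := fun i j hij => Nat.div_le_div_right (hb hij)
  have hlast : b (Fin.last k) / 2 ^ J ≤ k := Nat.div_le_of_le_mul (hn.trans_eq (mul_comm _ _))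
  have hsub : Ico (b 0 / 2 ^ J) (b (Fin.last k) / 2 ^ J) ⊆ range k := by
    intro m hm
    simp only [mem_Ico, mem_range] at hm ⊢
    omega
  calc _ ≤ ∑ m ∈ Ico (b 0 / 2 ^ J) (b (Fin.last k) / 2 ^ J),
          |φ ((m + 1) * 2 ^ J) - φ (m * 2 ^ J)| :=
        hc.sum_abs_sub_le_sum_Ico fun m => φ (m * 2 ^ J)
    _ ≤ ∑ m ∈ range k, |φ ((m + 1) * 2 ^ J) - φ (m * 2 ^ J)| :=
        sum_le_sum_of_subset_of_nonneg hsub fun _ _ _ => abs_nonneg _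
    _ ≤ √k * √(levelEnergy φ k J 0) := by
        simpa [levelEnergy] using sum_abs_le_sqrt_card_mul_sqrt_sum_sq (range k)
          fun m => φ ((m + 1) * 2 ^ J) - φ (m * 2 ^ J)

theorem Monotone.sum_abs_sub_levelFloor_succ_sub_le (hb : Monotone b)
    (hn : b (Fin.last k) ≤ k * 2 ^ J) {j : ℕ} (hj : j < J) :
    ∑ i : Fin k, |(φ (levelFloor J (j + 1) (b i.succ)) - φ (levelFloor J j (b i.succ))) -
      (φ (levelFloor J (j + 1) (b i.castSucc)) - φ (levelFloor J j (b i.castSucc)))| ≤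
      2 * √k * √(levelEnergy φ k J (j + 1)) := by
  set w := 2 ^ (J - (j + 1))
  have hw : 2 ^ (J - j) = w * 2 := by rw [← pow_succ]; congr 1; omega
  -- The level-`j` floor of `x` is the level-`(j + 1)` floor of `x` rounded down to an even cell.
  have hcell : ∀ x, x / 2 ^ (J - j) * 2 ^ (J - j) = x / w / 2 * 2 * w := by
    intro x; rw [hw, ← Nat.div_div_eq_div_mul]; ring
  have hc : Monotone fun i => b i / w := fun i j hij => Nat.div_le_div_right (hb hij)
  have hlast : b (Fin.last k) / w ≤ k * 2 ^ (j + 1) := by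
    refine Nat.div_le_of_le_mul (hn.trans_eq ?_)
    rw [mul_comm w, mul_assoc, ← pow_add]; congr 2; omega
  simp only [levelFloor, hcell]
  calc _ ≤ 2 * √k * √(∑ m ∈ range (b (Fin.last k) / w + 1),
          (φ (m * w) - φ (m / 2 * 2 * w)) ^ 2) :=
        hc.sum_abs_sub_le_two_mul_sqrt fun m => φ (m * w) - φ (m / 2 * 2 * w)
    _ ≤ 2 * √k * √(∑ m ∈ range (k * 2 ^ (j + 1) + 1),
          (φ (m * w) - φ (m / 2 * 2 * w)) ^ 2) := by gcongr
    _ ≤ 2 * √k * √(levelEnergy φ k J (j + 1)) := by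
        gcongr
        exact sum_sq_sub_half_mul_two_le (fun m => φ (m * w)) _

theorem eq_levelFloor_zero_add_sum (J x : ℕ) :
    φ x = φ (levelFloor J 0 x) +
      ∑ j ∈ range J, (φ (levelFloor J (j + 1) x) - φ (levelFloor J j x)) := by
  rw [sum_range_sub (fun j => φ (levelFloor J j x))]
  simp [levelFloor]

theorem Monotone.sum_abs_sub_le_levelEnergy (hb : Monotone b) (hn : b (Fin.last k) ≤ k * 2 ^ J) :
    ∑ i : Fin k, |φ (b i.succ) - φ (b i.castSucc)| ≤
      2 * √k * ∑ j ∈ range (J + 1), √(levelEnergy φ k J j) := by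
  set D : ℕ → ℕ → ℝ := fun j x => φ (levelFloor J (j + 1) x) - φ (levelFloor J j x)
  calc ∑ i : Fin k, |φ (b i.succ) - φ (b i.castSucc)|
      = ∑ i : Fin k, |(φ (levelFloor J 0 (b i.succ)) - φ (levelFloor J 0 (b i.castSucc))) +
          ∑ j ∈ range J, (D j (b i.succ) - D j (b i.castSucc))| := by
        refine sum_congr rfl fun i _ => congrArg _ ?_
        rw [eq_levelFloor_zero_add_sum φ J (b i.succ),
          eq_levelFloor_zero_add_sum φ J (b i.castSucc)]
        simp only [D, sum_sub_distrib]
        ring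
    _ ≤ ∑ i : Fin k, (|φ (levelFloor J 0 (b i.succ)) - φ (levelFloor J 0 (b i.castSucc))| +
          ∑ j ∈ range J, |D j (b i.succ) - D j (b i.castSucc)|) :=
        sum_le_sum fun i _ => (abs_add_le _ _).trans (add_le_add_right (abs_sum_le_sum_abs _ _) _)
    _ = ∑ i : Fin k, |φ (levelFloor J 0 (b i.succ)) - φ (levelFloor J 0 (b i.castSucc))| +
          ∑ j ∈ range J, ∑ i : Fin k, |D j (b i.succ) - D j (b i.castSucc)| := by
        rw [sum_add_distrib, sum_comm]
    _ ≤ √k * √(levelEnergy φ k J 0) +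
          ∑ j ∈ range J, 2 * √k * √(levelEnergy φ k J (j + 1)) :=
        add_le_add (hb.sum_abs_sub_levelFloor_zero_le φ hn)
          (sum_le_sum fun j hj => hb.sum_abs_sub_levelFloor_succ_sub_le φ hn (mem_range.mp hj))
    _ ≤ 2 * √k * ∑ j ∈ range (J + 1), √(levelEnergy φ k J j) := by
        rw [sum_range_succ', mul_add, mul_sum]
        have : 0 ≤ √k * √(levelEnergy φ k J 0) := by positivity
        linarith

end Multiscale

theorem intervalMass_add {n : ℕ} (q : Fin n → ℝ) {a b c : ℕ} (hab : a ≤ b)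
    (hbc : b ≤ c) :
    intervalMass q a c = intervalMass q a b + intervalMass q b c := by
  unfold intervalMass
  rw [← sum_union (disjoint_filter.mpr fun j _ hj hj' => by omega)]
  congr 1
  ext j
  simp only [mem_union, mem_filter, mem_univ, true_and]
  omega

theorem intervalMass_unif_zero {n x : ℕ} (hx : x ≤ n) :
    intervalMass (unif n) 0 x = x / n := by
  simp [intervalMass, unif, Fin.card_filter_val_lt, hx, div_eq_mul_one_div (x : ℝ)]

noncomputable def cumDiscr {n : ℕ} (q : Fin n → ℝ) (x : ℕ) : ℝ :=
  intervalMass q 0 x - x / n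

theorem intervalMass_sub_unif {n : ℕ} (q : Fin n → ℝ) {a b : ℕ} (hab : a ≤ b)
    (hb : b ≤ n) :
    intervalMass q a b - intervalMass (unif n) a b = cumDiscr q b - cumDiscr q a := by
  have hq := intervalMass_add q (Nat.zero_le a) hab
  have hu := intervalMass_add (unif n) (Nat.zero_le a) hab
  rw [intervalMass_unif_zero hb, intervalMass_unif_zero (hab.trans hb)] at hu
  rw [cumDiscr, cumDiscr]
  linarith

theorem akDist_unif_le {k J : ℕ} (q : Fin (k * 2 ^ J) → ℝ) :
    AkDist (k * 2 ^ J) k q (unif (k * 2 ^ J)) ≤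
      2 * √k * ∑ j ∈ range (J + 1), √(levelEnergy (cumDiscr q) k J j) := by
  refine Real.sSup_le ?_ (by positivity)
  rintro x ⟨b, hb, -, hlast, rfl⟩
  calc _ = ∑ i : Fin k, |cumDiscr q (b i.succ) - cumDiscr q (b i.castSucc)| :=
        sum_congr rfl fun i _ => by
          rw [intervalMass_sub_unif q (hb (Fin.castSucc_le_succ i))
            (hlast ▸ hb (Fin.le_last _))]
    _ ≤ _ := hb.sum_abs_sub_le_levelEnergy _ hlast.le

theorem levelEnergy_cumDiscr {k J j : ℕ} (q : Fin (k * 2 ^ J) → ℝ) (hj : j ≤ J) :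
    levelEnergy (cumDiscr q) k J j =
      ∑ i : Fin (k * 2 ^ j), (reducedDist q (k * 2 ^ j) i - 1 / (k * 2 ^ j : ℝ)) ^ 2 := by
  have hsplit : k * 2 ^ J = k * 2 ^ j * 2 ^ (J - j) := by
    rw [mul_assoc, ← pow_add, Nat.add_sub_cancel' hj]
  rw [levelEnergy, ← Fin.sum_univ_eq_sum_range]
  refine sum_congr rfl fun i _ => ?_
  have hpos : 0 < k * 2 ^ j := i.pos
  have hwidth : k * 2 ^ J / (k * 2 ^ j) = 2 ^ (J - j) := by
    rw [hsplit, Nat.mul_div_cancel_left _ hpos]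
  rw [reducedDist, hwidth, cumDiscr, cumDiscr,
    intervalMass_add q (Nat.zero_le _) (Nat.mul_le_mul_right _ (Nat.le_succ _))]
  have hpow : (2 : ℝ) ^ J = 2 ^ j * 2 ^ (J - j) := by rw [← pow_add, Nat.add_sub_cancel' hj]
  push_cast
  rw [hpow]
  field_simp
  ring

theorem sqrt_mul_sqrt_le_of_le_sq_div {a x c : ℝ} (ha : 0 ≤ a) (hc : 0 ≤ c)
    (h : x ≤ c ^ 2 / a) :
    √a * √x ≤ c := by
  rw [← Real.sqrt_mul ha, Real.sqrt_le_iff, mul_comm]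
  exact ⟨hc, mul_le_of_le_div₀ (sq_nonneg c) ha h⟩

theorem two_rpow_neg_div_four (j : ℕ) :
    (2 : ℝ) ^ (-(j : ℝ) / 4) = (((2 : ℝ) ^ (-(1 / 8 : ℝ))) ^ j) ^ 2 := by
  rw [← pow_mul, ← Real.rpow_natCast, ← Real.rpow_mul (by norm_num)]
  congr 1
  push_cast
  ring

theorem sum_range_two_rpow_neg_le (N : ℕ) :
    ∑ j ∈ range N, ((2 : ℝ) ^ (-(1 / 8 : ℝ))) ^ j ≤ 13 := by
  set r : ℝ := (2 : ℝ) ^ (-(1 / 8 : ℝ))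
  have hr0 : 0 ≤ r := by positivity
  have hr8 : r ^ 8 = 1 / 2 := by
    rw [← Real.rpow_natCast, ← Real.rpow_mul (by norm_num)]
    norm_num
  have hr : r ≤ 12 / 13 := by
    refine le_of_pow_le_pow_left₀ (n := 8) (by norm_num) (by norm_num) ?_
    rw [hr8]
    norm_num
  calc ∑ j ∈ range N, r ^ j ≤ r ^ 0 / (1 - r) := by
        rw [range_eq_Ico]
        exact geom_sum_Ico_le_of_lt_one hr0 (by linarith)
    _ ≤ 13 := by
        rw [pow_zero, div_le_iff₀ (by linarith)]
        linarith

theorem structural_lemma_general_general (k j₀ : ℕ)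
    (q : Fin (k * 2 ^ (j₀ - 1)) → ℝ) (ε : ℝ) (hε : 0 < ε)
    (h : ε ≤ AkDist (k * 2 ^ (j₀ - 1)) k q (unif (k * 2 ^ (j₀ - 1)))) :
    ∃ j ≤ j₀ - 1,
      (10 : ℝ) ^ (-10 : ℤ) * (2 : ℝ) ^ (-(j : ℝ) / 4) * ε ^ 2 / k ≤
        ∑ i : Fin (k * 2 ^ j), (reducedDist q (k * 2 ^ j) i - 1 / (k * 2 ^ j : ℝ)) ^ 2 := by
  by_contra! hsmall
  set r : ℝ := (2 : ℝ) ^ (-(1 / 8 : ℝ))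
  have hlevel : ∀ j ∈ range (j₀ - 1 + 1),
      √k * √(levelEnergy (cumDiscr q) k (j₀ - 1) j) ≤ 10 ^ (-5 : ℤ) * ε * r ^ j := by
    intro j hj
    have hj : j ≤ j₀ - 1 := Nat.lt_succ_iff.mp (mem_range.mp hj)
    refine sqrt_mul_sqrt_le_of_le_sq_div k.cast_nonneg (by positivity) ?_
    have hsq : (10 ^ (-5 : ℤ) * ε * r ^ j) ^ 2 =
        10 ^ (-10 : ℤ) * 2 ^ (-(j : ℝ) / 4) * ε ^ 2 := by
      rw [two_rpow_neg_div_four]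
      ring
    rw [levelEnergy_cumDiscr q hj, hsq]
    exact (hsmall j hj).le
  have hbound : ε ≤ 2 * 10 ^ (-5 : ℤ) * ε * 13 :=
    calc ε ≤ AkDist (k * 2 ^ (j₀ - 1)) k q (unif (k * 2 ^ (j₀ - 1))) := h
      _ ≤ 2 * √k * ∑ j ∈ range (j₀ - 1 + 1),
            √(levelEnergy (cumDiscr q) k (j₀ - 1) j) :=
        akDist_unif_le q
      _ ≤ 2 * ∑ j ∈ range (j₀ - 1 + 1), 10 ^ (-5 : ℤ) * ε * r ^ j := by
        rw [mul_assoc, mul_sum]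
        exact mul_le_mul_of_nonneg_left (sum_le_sum hlevel) zero_le_two
      _ ≤ 2 * 10 ^ (-5 : ℤ) * ε * 13 := by
        rw [← mul_sum, ← mul_assoc, ← mul_assoc]
        gcongr
        exact sum_range_two_rpow_neg_le _
  norm_num at hbound
  linarith

/-- **Structural lemma (general case).** For `n = k·2^{j₀-1}`, if `‖q - U_n‖_{A_k} ≥ ε` then
for some level `0 ≤ j ≤ j₀-1` the reduced distribution of `q` on the partition of `[n]` into
`ℓ_j = k·2^j` equal intervals satisfies `‖q_r - U_{ℓ_j}‖₂² ≥ 10⁻¹⁰ · 2^{-j/4} · ε²/k`. -/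
theorem structural_lemma_general (k j₀ : ℕ) (hk : 2 ≤ k) (hj₀ : 1 ≤ j₀)
    (q : Fin (k * 2 ^ (j₀ - 1)) → ℝ) (hq : IsDist q) (ε : ℝ) (hε : 0 < ε) (hε1 : ε < 1)
    (h : ε ≤ AkDist (k * 2 ^ (j₀ - 1)) k q (unif (k * 2 ^ (j₀ - 1)))) :
    ∃ j ≤ j₀ - 1,
      (10 : ℝ) ^ (-10 : ℤ) * (2 : ℝ) ^ (-(j : ℝ) / 4) * ε ^ 2 / k ≤
        ∑ i : Fin (k * 2 ^ j), (reducedDist q (k * 2 ^ j) i - 1 / (k * 2 ^ j : ℝ)) ^ 2 :=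
  structural_lemma_general_general k j₀ q ε hε h
end
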